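/- Let T be a positive random variable with T^{-ℓ} integrable, let C be a random variable with survival function Ḡ, independent of the pair (T, X) where X is a real-valued covariate, and suppose Ḡ(T) > 0 a.s. Set Y = min(T, C), δ = 1{T ≤ C}. Then for ℓ = 1, 2, the synthetic response satisfies E[ δ Y^{-ℓ} / Ḡ(Y) | X ] = E[ T^{-ℓ} | X ] almost surely. -/

import Mathlib

/-!
On `{T ≤ C}` the synthetic response is `h T / Ḡ T`. Since `C` is independent of `(T, X)`,
integrating out `C` turns `E[φ(T, X) 1{T ≤ C}]` into `E[φ(T, X) P(C ≥ T)]`, and continuity of `Ḡ`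
means `C` has no atoms, so `P(C ≥ t) = Ḡ t`. With `φ(t, x) = 1_B(x) h(t) / Ḡ(t)` the factor `Ḡ T`
cancels, giving equal integrals over every `σ(X)`-measurable set `X ⁻¹' B`, which characterises
the conditional expectation.
-/

open MeasureTheory ProbabilityTheory Filter Set Function
open scoped ENNReal

lemma nullSingletonClass_of_continuous_measureReal_Ioi {κ : Measure ℝ} [IsProbabilityMeasure κ]
    (h : Continuous fun s => κ.real (Ioi s)) : NullSingletonClass κ where
  measure_singleton t := by
    have hcdf : ⇑(cdf κ) = fun s => 1 - κ.real (Ioi s) := by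
      ext s
      rw [cdf_eq_real, ← compl_Ioi, probReal_compl_eq_one_sub measurableSet_Ioi]
    have hleft : leftLim (cdf κ) t = cdf κ t := by
      refine leftLim_eq_of_tendsto (Tendsto.mono_left ?_ nhdsWithin_le_nhds)
      rw [hcdf]
      exact (continuous_const.sub h).tendsto t
    rw [← measure_cdf κ, StieltjesFunction.measure_singleton, hleft, sub_self,
      ENNReal.ofReal_zero]

lemma ProbabilityTheory.IndepFun.lintegral_comp_eq_lintegral_lintegral_map
    {Ω β γ : Type*} [MeasurableSpace Ω] [MeasurableSpace β] [MeasurableSpace γ]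
    {μ : Measure Ω} [IsFiniteMeasure μ] {Z : Ω → β} {C : Ω → γ}
    (hZC : IndepFun Z C μ) (hZ : Measurable Z) (hC : Measurable C)
    {Φ : β × γ → ℝ≥0∞} (hΦ : Measurable Φ) :
    ∫⁻ ω, Φ (Z ω, C ω) ∂μ = ∫⁻ ω, ∫⁻ c, Φ (Z ω, c) ∂(μ.map C) ∂μ := by
  rw [← lintegral_map hΦ (hZ.prodMk hC),
    (indepFun_iff_map_prod_eq_prod_map_map hZ.aemeasurable hC.aemeasurable).mp hZC,
    lintegral_prod _ hΦ.aemeasurable, lintegral_map hΦ.lintegral_prod_right' hZ]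

noncomputable def syntheticResponse {Ω : Type*} (Gb h : ℝ → ℝ) (T C : Ω → ℝ) (ω : Ω) : ℝ :=
  (if T ω ≤ C ω then 1 else 0) * h (min (T ω) (C ω)) / Gb (min (T ω) (C ω))

lemma syntheticResponse_eq_indicator {Ω : Type*} (Gb h : ℝ → ℝ) (T C : Ω → ℝ) :
    syntheticResponse Gb h T C = {ω | T ω ≤ C ω}.indicator (fun ω => h (T ω) / Gb (T ω)) := by
  ext ω
  by_cases hTC : T ω ≤ C ω <;> simp [syntheticResponse, hTC]

lemma condExp_ae_eq_of_forall_setLIntegral_ofReal_eq {Ω : Type*} {m m₀ : MeasurableSpace Ω}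
    {μ : Measure Ω} [IsFiniteMeasure μ] (hm : m ≤ m₀) {f g : Ω → ℝ}
    (hf : 0 ≤ᵐ[μ] f) (hg : 0 ≤ᵐ[μ] g) (hfm : AEStronglyMeasurable f μ) (hgi : Integrable g μ)
    (hfg : ∀ s, MeasurableSet[m] s →
      ∫⁻ ω in s, ENNReal.ofReal (f ω) ∂μ = ∫⁻ ω in s, ENNReal.ofReal (g ω) ∂μ) :
    μ[f|m] =ᵐ[μ] μ[g|m] := by
  have hfi : Integrable f μ := by
    refine ⟨hfm, (hasFiniteIntegral_iff_ofReal hf).mpr ?_⟩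
    have hfg_univ := hfg univ MeasurableSet.univ
    rw [Measure.restrict_univ] at hfg_univ
    exact hfg_univ ▸ (hasFiniteIntegral_iff_ofReal hg).mp hgi.2
  refine ae_eq_condExp_of_forall_setIntegral_eq hm hgi
    (fun s _ _ => integrable_condExp.integrableOn) (fun s hs _ => ?_)
    stronglyMeasurable_condExp.aestronglyMeasurable
  rw [setIntegral_condExp hm hfi hs, integral_eq_lintegral_of_nonneg_ae (ae_restrict_of_ae hf)
    hfm.restrict, integral_eq_lintegral_of_nonneg_ae (ae_restrict_of_ae hg)
    hgi.1.restrict, hfg s hs]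

section Censoring

variable {Ω β : Type*} [MeasurableSpace Ω] [MeasurableSpace β] {μ : Measure Ω}
  [IsProbabilityMeasure μ] {T C : Ω → ℝ} {X : Ω → β} {Gb : ℝ → ℝ}

lemma lintegral_indicator_le_eq_lintegral_mul_survival (hT : Measurable T) (hX : Measurable X)
    (hC : Measurable C) (hTC : IndepFun (fun ω => (T ω, X ω)) C μ)
    (hGb : ∀ t, Gb t = (μ {ω | t < C ω}).toReal) (hGcont : Continuous Gb)
    {φ : ℝ × β → ℝ≥0∞} (hφ : Measurable φ) :
    ∫⁻ ω, {ω | T ω ≤ C ω}.indicator (fun ω => φ (T ω, X ω)) ω ∂μ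
      = ∫⁻ ω, φ (T ω, X ω) * ENNReal.ofReal (Gb (T ω)) ∂μ := by
  have hlaw : ∀ t, μ.map C (Ici t) = ENNReal.ofReal (Gb t) := by
    have hGb_map : Gb = fun s => (μ.map C).real (Ioi s) := by
      ext s
      rw [hGb, measureReal_def, Measure.map_apply hC measurableSet_Ioi]
      rfl
    have := Measure.isProbabilityMeasure_map (μ := μ) hC.aemeasurable
    have := nullSingletonClass_of_continuous_measureReal_Ioi (hGb_map ▸ hGcont)
    intro t
    rw [← measure_congr Ioi_ae_eq_Ici, hGb_map]
    exact (ENNReal.ofReal_toReal (measure_ne_top _ _)).symm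
  have hS : MeasurableSet {p : (ℝ × β) × ℝ | p.1.1 ≤ p.2} :=
    measurableSet_le (measurable_fst.comp measurable_fst) measurable_snd
  calc ∫⁻ ω, {ω | T ω ≤ C ω}.indicator (fun ω => φ (T ω, X ω)) ω ∂μ
      = ∫⁻ ω, {p : (ℝ × β) × ℝ | p.1.1 ≤ p.2}.indicator (fun p => φ p.1) ((T ω, X ω), C ω) ∂μ :=
        by simp only [indicator_apply, mem_ofPred_eq]
    _ = ∫⁻ ω, ∫⁻ c, (Ici (T ω)).indicator (fun _ => φ (T ω, X ω)) c ∂(μ.map C) ∂μ := by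
        rw [hTC.lintegral_comp_eq_lintegral_lintegral_map (hT.prodMk hX) hC
          (Φ := {p : (ℝ × β) × ℝ | p.1.1 ≤ p.2}.indicator fun p => φ p.1)
          ((hφ.comp measurable_fst).indicator hS)]
        simp only [indicator_apply, mem_ofPred_eq, mem_Ici]
    _ = ∫⁻ ω, φ (T ω, X ω) * ENNReal.ofReal (Gb (T ω)) ∂μ := by
        simp only [lintegral_indicator_const measurableSet_Ici, hlaw]

lemma setLIntegral_syntheticResponse (hT : Measurable T) (hX : Measurable X)
    (hC : Measurable C) (hTC : IndepFun (fun ω => (T ω, X ω)) C μ)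
    (hGb : ∀ t, Gb t = (μ {ω | t < C ω}).toReal) (hGcont : Continuous Gb)
    (hGT : ∀ᵐ ω ∂μ, 0 < Gb (T ω)) {h : ℝ → ℝ} (hh : Measurable h) {B : Set β}
    (hB : MeasurableSet B) :
    ∫⁻ ω in X ⁻¹' B, ENNReal.ofReal (syntheticResponse Gb h T C ω) ∂μ
      = ∫⁻ ω in X ⁻¹' B, ENNReal.ofReal (h (T ω)) ∂μ := by
  set φ : ℝ × β → ℝ≥0∞ :=
    (Prod.snd ⁻¹' B).indicator fun p => ENNReal.ofReal (h p.1 / Gb p.1)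
  have hφ : Measurable φ :=
    ((hh.comp measurable_fst).div (hGcont.measurable.comp measurable_fst)).ennreal_ofReal.indicator
      (measurable_snd hB)
  rw [syntheticResponse_eq_indicator, ← lintegral_indicator (hX hB),
    ← lintegral_indicator (hX hB)]
  calc _ = ∫⁻ ω, {ω | T ω ≤ C ω}.indicator (fun ω => φ (T ω, X ω)) ω ∂μ := by
        congr 1
        ext ω
        by_cases hXB : X ω ∈ B <;> by_cases hTC : T ω ≤ C ω <;> simp [φ, hXB, hTC]
    _ = ∫⁻ ω, φ (T ω, X ω) * ENNReal.ofReal (Gb (T ω)) ∂μ :=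
        lintegral_indicator_le_eq_lintegral_mul_survival hT hX hC hTC hGb hGcont hφ
    _ = _ := by
        refine lintegral_congr_ae ?_
        filter_upwards [hGT] with ω hGω
        by_cases hXB : X ω ∈ B
        · simp [φ, hXB, ← ENNReal.ofReal_mul' hGω.le, div_mul_cancel₀ _ hGω.ne']
        · simp [φ, hXB]

theorem condExp_syntheticResponse_ae_eq (hT : Measurable T) (hX : Measurable X)
    (hC : Measurable C) (hTC : IndepFun (fun ω => (T ω, X ω)) C μ)
    (hGb : ∀ t, Gb t = (μ {ω | t < C ω}).toReal) (hGcont : Continuous Gb)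
    (hGT : ∀ᵐ ω ∂μ, 0 < Gb (T ω)) {h : ℝ → ℝ} (hh : Measurable h)
    (hhT : ∀ᵐ ω ∂μ, 0 ≤ h (T ω)) (hhi : Integrable (fun ω => h (T ω)) μ) :
    μ[syntheticResponse Gb h T C | MeasurableSpace.comap X inferInstance]
      =ᵐ[μ] μ[fun ω => h (T ω) | MeasurableSpace.comap X inferInstance] := by
  have hGb_nonneg (t : ℝ) : 0 ≤ Gb t := hGb t ▸ ENNReal.toReal_nonneg
  refine condExp_ae_eq_of_forall_setLIntegral_ofReal_eq hX.comap_le ?_ hhT ?_ hhi ?_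
  · filter_upwards [hhT] with ω hω
    rw [syntheticResponse_eq_indicator]
    exact indicator_nonneg (fun ω' _ => div_nonneg hω (hGb_nonneg _)) ω
  · rw [syntheticResponse_eq_indicator]
    exact ((hh.comp hT).div (hGcont.measurable.comp hT)).indicator
      (measurableSet_le hT hC) |>.aestronglyMeasurable
  · rintro _ ⟨B, hB, rfl⟩
    exact setLIntegral_syntheticResponse hT hX hC hTC hGb hGcont hGT hh hB

end Censoring

/-- **Synthetic data identity** : if `C` is independent of `(T, X)`, `Ḡ(t) = P(C > t)` is
continuous with `Ḡ(T) > 0` a.s., `T > 0` and `T^{-ℓ}` is integrable, then for `ℓ = 1, 2`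
`E[δ Y^{-ℓ} / Ḡ(Y) | X] = E[T^{-ℓ} | X]` almost surely, where `Y = min T C`,
`δ = 1_{T ≤ C}`. -/
theorem synthetic_data_condexp
    {Ω : Type*} [MeasurableSpace Ω] (μ : Measure Ω) [IsProbabilityMeasure μ]
    (T X C : Ω → ℝ)
    (hTmeas : Measurable T) (hXmeas : Measurable X) (hCmeas : Measurable C)
    (hTpos : ∀ᵐ ω ∂μ, 0 < T ω)
    (hInt : ∀ ℓ ∈ ({1, 2} : Set ℕ), Integrable (fun ω => (T ω) ^ (-(ℓ : ℤ))) μ)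
    -- independence of (T, X) and C
    (hTC : IndepFun (fun ω => (T ω, X ω)) C μ)
    -- Ḡ(t) = P(C > t), continuous, with Ḡ(T) > 0 a.s.
    (Gb : ℝ → ℝ) (hGb : ∀ t, Gb t = (μ {ω | t < C ω}).toReal)
    (hGcont : Continuous Gb)
    (hGT : ∀ᵐ ω ∂μ, 0 < Gb (T ω)) :
    ∀ ℓ ∈ ({1, 2} : Set ℕ),
      μ[(fun ω => (if T ω ≤ C ω then (1 : ℝ) else 0) * (min (T ω) (C ω)) ^ (-(ℓ : ℤ))
          / Gb (min (T ω) (C ω))) | MeasurableSpace.comap X inferInstance]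
        =ᵐ[μ]
      μ[(fun ω => (T ω) ^ (-(ℓ : ℤ))) | MeasurableSpace.comap X inferInstance] := by
  intro ℓ hℓ
  exact condExp_syntheticResponse_ae_eq hTmeas hXmeas hCmeas hTC hGb hGcont hGT
    (h := fun t => t ^ (-(ℓ : ℤ))) (by fun_prop) (hTpos.mono fun ω hω => zpow_nonneg hω.le _)
    (hInt ℓ hℓ)
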